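/- Let f be holomorphic on Ω(c,C)^m with asymptotic expansion a. Then for every i ∈ {1,…,m} the partial derivative ∂f/∂zᵢ is holomorphic on Ω(c,C)^m and has asymptotic expansion α ↦ αᵢ·a(α). -/

import Mathlib

noncomputable section
open scoped Classical

/-- Logarithmic model of a standard quadratic domain:
`Ω(c,C) = {z : Re z < log c - C·√|Im z|}`. -/
def SQD (c C : ℝ) : Set ℂ := {z : ℂ | z.re < Real.log c - C * Real.sqrt |z.im|}

/-- The cartesian power `Ω(c,C)^m`. -/
def QDom (c C : ℝ) (m : ℕ) : Set (Fin m → ℂ) := {z | ∀ i, z i ∈ SQD c C}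

/-- Open disc `D_R` of radius `R` centred at `0`. -/
def Disc (R : ℝ) : Set ℂ := {w : ℂ | ‖w‖ < R}

/-- Polydisc `D_R^n`. -/
def PDisc (R : ℝ) (n : ℕ) : Set (Fin n → ℂ) := {y | ∀ j, y j ∈ Disc R}

/-- The exponential monomial `exp⟨α,z⟩`. -/
def expMono {m : ℕ} (α : Fin m → ℝ) (z : Fin m → ℂ) : ℂ :=
  Complex.exp (∑ i, (α i : ℂ) * z i)

/-- Euclidean norm of `E(z) = (exp (Re z₁), …, exp (Re z_m))`. -/
def eNorm {m : ℕ} (z : Fin m → ℂ) : ℝ :=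
  Real.sqrt (∑ i, Real.exp ((z i).re) ^ 2)

/-- A generalized power series with natural support: nonnegative exponents, and in each
coordinate the set of exponents below any bound is finite. -/
def NaturalSeries {m : ℕ} (a : (Fin m → ℝ) → ℂ) : Prop :=
  (∀ α, a α ≠ 0 → ∀ i, 0 ≤ α i) ∧
  ∀ i : Fin m, ∀ R : ℝ, 0 < R → {r : ℝ | (∃ α, a α ≠ 0 ∧ α i = r) ∧ r ≤ R}.Finite

/-- `f` has asymptotic expansion `a` on `Ω(c,C)^m`: for every `ν > 0` there is a smaller
standard quadratic domain on which `f` minus the partial sum of weight `≤ ν` is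
`o(‖E(z)‖^ν)` as `‖E(z)‖ → 0`. -/
def HasAsymExp {m : ℕ} (c C : ℝ) (f : (Fin m → ℂ) → ℂ) (a : (Fin m → ℝ) → ℂ) : Prop :=
  NaturalSeries a ∧
  ∀ ν : ℝ, 0 < ν → ∃ c' C' : ℝ, 0 < c' ∧ 0 < C' ∧ SQD c' C' ⊆ SQD c C ∧
    ∃ F : Finset (Fin m → ℝ),
      (∀ α, α ∈ F ↔ a α ≠ 0 ∧ ∑ i, α i ≤ ν) ∧
      ∀ ε : ℝ, 0 < ε → ∃ δ : ℝ, 0 < δ ∧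
        ∀ z ∈ QDom c' C' m, eNorm z < δ →
          ‖f z - ∑ α ∈ F, a α * expMono α z‖ ≤ ε * eNorm z ^ ν

/-!
The partial derivative `∂ᵢf` is holomorphic because, by the Cauchy integral formula in the
`i`-th variable, near any point it equals
`(2π)⁻¹ ∫₀^{2π} (R e^{iθ})⁻¹ f(z + R e^{iθ} eᵢ) dθ`, a parametric integral of translates of `f`;
Cauchy's estimates bound `‖f'‖` on compact sets, so one may differentiate under the integral sign.

For the expansion, fix `z` and apply Cauchy's estimate on the unit disc in the `i`-th variable to
`f` minus its partial sum of weight `≤ ν`, whose `i`-th derivative is the partial sum of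
`α ↦ αᵢ a(α)`. On that disc `Re zᵢ` grows by at most `1`, so `‖E‖` grows by at most a factor `e`
(which costs `e^ν` in the bound), and the disc stays in `Ω(c', C')` once
`z ∈ Ω(c' e^{-(1+C')}, C')`.
-/

open Metric Set MeasureTheory Topology

section CauchyEstimates

variable {ι : Type*} [Fintype ι] [DecidableEq ι]
  {E : Type*} [NormedAddCommGroup E] [NormedSpace ℂ E]
  {f : (ι → ℂ) → E} {z : ι → ℂ} {i : ι}

theorem hasDerivAt_add_single {w : ℂ} (hf : DifferentiableAt ℂ f (z + Pi.single i w)) :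
    HasDerivAt (fun s => f (z + Pi.single i s))
      (fderiv ℂ f (z + Pi.single i w) (Pi.single i 1)) w :=
  hf.hasFDerivAt.comp_hasDerivAt w ((hasDerivAt_single i w).const_add z)

theorem dist_add_single_self (z : ι → ℂ) (i : ι) (s : ℂ) : dist (z + Pi.single i s) z = ‖s‖ := by
  rw [dist_eq_norm, add_sub_cancel_left, Pi.norm_single]

theorem norm_fderiv_apply_single_le {r M : ℝ} (hr : 0 < r)
    (hf : ∀ s ∈ closedBall (0 : ℂ) r, DifferentiableAt ℂ f (z + Pi.single i s))
    (hM : ∀ s ∈ sphere (0 : ℂ) r, ‖f (z + Pi.single i s)‖ ≤ M) :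
    ‖fderiv ℂ f z (Pi.single i 1)‖ ≤ M / r := by
  have hslice : DiffContOnCl ℂ (fun s => f (z + Pi.single i s)) (ball 0 r) := by
    refine DifferentiableOn.diffContOnCl fun s hs => ?_
    rw [closure_ball _ hr.ne'] at hs
    exact (hasDerivAt_add_single (hf s hs)).differentiableAt.differentiableWithinAt
  have h0 := hasDerivAt_add_single (hf 0 (mem_closedBall_self hr.le))
  rw [Pi.single_zero, add_zero] at h0
  rw [← h0.deriv]
  exact Complex.norm_deriv_le_of_forall_mem_sphere_norm_le hr hslice hM

theorem ContinuousLinearMap.norm_le_sum_norm_apply_single {𝕜 : Type*} [NontriviallyNormedField 𝕜]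
    {F : Type*} [NormedAddCommGroup F] [NormedSpace 𝕜 F] (L : (ι → 𝕜) →L[𝕜] F) :
    ‖L‖ ≤ ∑ j, ‖L (Pi.single j 1)‖ := by
  refine L.opNorm_le_bound (by positivity) fun v => ?_
  calc ‖L v‖ = ‖∑ j, v j • L (Pi.single j 1)‖ := by
        conv_lhs => rw [← Finset.univ_sum_single v]
        simp [← map_smul, ← Pi.single_smul]
    _ ≤ ∑ j, ‖v j‖ * ‖L (Pi.single j 1)‖ := by
        simpa only [norm_smul] using norm_sum_le Finset.univ fun j => v j • L (Pi.single j 1)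
    _ ≤ ∑ j, ‖v‖ * ‖L (Pi.single j 1)‖ := by
        gcongr with j; exact norm_le_pi_norm v j
    _ = (∑ j, ‖L (Pi.single j 1)‖) * ‖v‖ := by rw [← Finset.mul_sum, mul_comm]

theorem norm_fderiv_le_of_forall_mem_closedBall {r M : ℝ} (hr : 0 < r)
    (hf : ∀ x ∈ closedBall z r, DifferentiableAt ℂ f x)
    (hM : ∀ x ∈ closedBall z r, ‖f x‖ ≤ M) :
    ‖fderiv ℂ f z‖ ≤ Fintype.card ι * (M / r) := by
  have hdisc : ∀ j, ∀ s ∈ closedBall (0 : ℂ) r, z + Pi.single j s ∈ closedBall z r := by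
    intro j s hs
    rwa [mem_closedBall, dist_add_single_self, ← dist_zero_right]
  refine (fderiv ℂ f z).norm_le_sum_norm_apply_single.trans ?_
  rw [← nsmul_eq_mul, ← Finset.card_univ, ← Finset.sum_const]
  exact Finset.sum_le_sum fun j _ => norm_fderiv_apply_single_le hr
    (fun s hs => hf _ (hdisc j s hs)) (fun s hs => hM _ (hdisc j s (sphere_subset_closedBall hs)))

theorem add_single_mem_closedBall_two_mul {z₀ : ι → ℂ} {R : ℝ} (hz : z ∈ ball z₀ R) {s : ℂ}
    (hs : ‖s‖ ≤ R) : z + Pi.single i s ∈ closedBall z₀ (2 * R) := by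
  have := dist_triangle (z + Pi.single i s) z z₀
  rw [dist_add_single_self] at this
  rw [mem_closedBall]
  linarith [mem_ball.mp hz]

theorem IsCompact.exists_bound_norm_fderiv {K U : Set (ι → ℂ)} (hK : IsCompact K) (hU : IsOpen U)
    (hKU : K ⊆ U) (hf : DifferentiableOn ℂ f U) : ∃ M, ∀ x ∈ K, ‖fderiv ℂ f x‖ ≤ M := by
  obtain ⟨δ, hδ, hδU⟩ := hK.exists_cthickening_subset_open hU hKU
  obtain ⟨M, hM⟩ :=
    (hK.cthickening (r := δ)).exists_bound_of_continuousOn (hf.continuousOn.mono hδU)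
  refine ⟨Fintype.card ι * (M / δ), fun x hx => norm_fderiv_le_of_forall_mem_closedBall hδ
    (fun y hy => hf.differentiableAt (hU.mem_nhds (hδU ?_))) (fun y hy => hM y ?_)⟩ <;>
  exact closedBall_subset_cthickening hx δ hy

end CauchyEstimates

section PartialDerivative

variable {ι : Type*} [Fintype ι] [DecidableEq ι] {f : (ι → ℂ) → ℂ} {z : ι → ℂ} {i : ι}

theorem fderiv_apply_single_eq_integral {R : ℝ} (hR : 0 < R)
    (hf : ∀ s ∈ closedBall (0 : ℂ) R, DifferentiableAt ℂ f (z + Pi.single i s)) :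
    fderiv ℂ f z (Pi.single i 1) = (2 * Real.pi : ℂ)⁻¹ *
      ∫ θ in 0..2 * Real.pi, (circleMap 0 R θ)⁻¹ * f (z + Pi.single i (circleMap 0 R θ)) := by
  have hslice : DifferentiableOn ℂ (fun s => f (z + Pi.single i s)) (closedBall 0 R) :=
    fun s hs => (hasDerivAt_add_single (hf s hs)).differentiableAt.differentiableWithinAt
  have hcauchy := hslice.deriv_eq_smul_circleIntegral hR
  have h0 := hasDerivAt_add_single (hf 0 (mem_closedBall_self hR.le))
  rw [Pi.single_zero, add_zero] at h0
  rw [h0.deriv, circleIntegral] at hcauchy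
  have hkernel : ∀ θ : ℝ, deriv (circleMap 0 R) θ • (1 / (circleMap 0 R θ - 0) ^ 2) •
      f (z + Pi.single i (circleMap 0 R θ)) =
      Complex.I * ((circleMap 0 R θ)⁻¹ * f (z + Pi.single i (circleMap 0 R θ))) := by
    intro θ
    have hc : circleMap 0 R θ ≠ 0 := circleMap_ne_center hR.ne'
    simp only [deriv_circleMap, smul_eq_mul, sub_zero]
    field_simp
  simp_rw [hkernel, intervalIntegral.integral_const_mul, smul_eq_mul] at hcauchy
  have hpi : (2 * Real.pi : ℂ) ≠ 0 := by exact_mod_cast Real.two_pi_pos.ne'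
  set J := ∫ θ in 0..2 * Real.pi, (circleMap 0 R θ)⁻¹ * f (z + Pi.single i (circleMap 0 R θ))
  have hJ : J = 2 * Real.pi * fderiv ℂ f z (Pi.single i 1) :=
    mul_left_cancel₀ Complex.I_ne_zero (by rw [hcauchy]; ring)
  rw [hJ, inv_mul_cancel_left₀ hpi]

theorem differentiableAt_integral_add_single {U : Set (ι → ℂ)} (hU : IsOpen U)
    (hf : DifferentiableOn ℂ f U) {z₀ : ι → ℂ} {R : ℝ} (hR : 0 < R)
    (hball : closedBall z₀ (2 * R) ⊆ U) :
    DifferentiableAt ℂ (fun z => ∫ θ in 0..2 * Real.pi,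
      (circleMap 0 R θ)⁻¹ * f (z + Pi.single i (circleMap 0 R θ))) z₀ := by
  set γ : (ι → ℂ) → ℝ → ι → ℂ := fun z θ => z + Pi.single i (circleMap 0 R θ)
  have hγ : ∀ z ∈ ball z₀ R, ∀ θ, γ z θ ∈ closedBall z₀ (2 * R) := fun z hz θ =>
    add_single_mem_closedBall_two_mul hz (by rw [norm_circleMap_zero, abs_of_pos hR])
  have hγcont : ∀ z, Continuous (γ z) := fun z =>
    continuous_const.add ((continuous_single i).comp (continuous_circleMap 0 R))
  obtain ⟨M, hM⟩ := (isCompact_closedBall z₀ (2 * R)).exists_bound_norm_fderiv hU hball hf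
  have hcont : ∀ z ∈ ball z₀ R, Continuous fun θ => (circleMap 0 R θ)⁻¹ * f (γ z θ) :=
    fun z hz => ((continuous_circleMap 0 R).inv₀ fun θ => circleMap_ne_center hR.ne').mul
      ((hf.continuousOn.mono hball).comp_continuous (hγcont z) (hγ z hz))
  refine (intervalIntegral.hasFDerivAt_integral_of_dominated_of_fderiv_le
    (F' := fun z θ => (circleMap 0 R θ)⁻¹ • fderiv ℂ f (γ z θ)) (bound := fun _ => R⁻¹ * M)
    (ball_mem_nhds z₀ hR) ?_ ?_ ?_ ?_ intervalIntegrable_const ?_).differentiableAt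
  · filter_upwards [isOpen_ball.mem_nhds (mem_ball_self hR)] with z hz
    exact (hcont z hz).aestronglyMeasurable
  · exact (hcont z₀ (mem_ball_self hR)).intervalIntegrable _ _
  · exact ((continuous_circleMap 0 R).measurable.inv.aestronglyMeasurable).smul
      ((measurable_fderiv ℂ f).comp (hγcont z₀).measurable).aestronglyMeasurable
  · refine Filter.Eventually.of_forall fun θ _ z hz => ?_
    rw [norm_smul, norm_inv, norm_circleMap_zero, abs_of_pos hR]
    exact mul_le_mul_of_nonneg_left (hM _ (hγ z hz θ)) (by positivity)
  · refine Filter.Eventually.of_forall fun θ _ z hz => ?_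
    have hfz : DifferentiableAt ℂ f (γ z θ) :=
      hf.differentiableAt (hU.mem_nhds (hball (hγ z hz θ)))
    exact (hfz.hasFDerivAt.comp z ((hasFDerivAt_id z).add_const _)).const_mul _

theorem IsOpen.differentiableOn_fderiv_apply_single {U : Set (ι → ℂ)}
    (hU : IsOpen U) (hf : DifferentiableOn ℂ f U) (i : ι) :
    DifferentiableOn ℂ (fun z => fderiv ℂ f z (Pi.single i 1)) U := by
  intro z₀ hz₀
  obtain ⟨R, hR, hball⟩ := nhds_basis_closedBall.mem_iff.mp (hU.mem_nhds hz₀)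
  have hR2 : 0 < R / 2 := half_pos hR
  rw [← mul_div_cancel₀ R two_ne_zero] at hball
  have hrepr : (fun z => fderiv ℂ f z (Pi.single i 1)) =ᶠ[𝓝 z₀] fun z =>
      (2 * Real.pi : ℂ)⁻¹ * ∫ θ in 0..2 * Real.pi,
        (circleMap 0 (R / 2) θ)⁻¹ * f (z + Pi.single i (circleMap 0 (R / 2) θ)) := by
    filter_upwards [isOpen_ball.mem_nhds (mem_ball_self hR2)] with z hz
    exact fderiv_apply_single_eq_integral hR2 fun s hs => hf.differentiableAt (hU.mem_nhds
      (hball (add_single_mem_closedBall_two_mul hz (mem_closedBall_zero_iff.mp hs))))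
  exact ((differentiableAt_integral_add_single hU hf hR2 hball).const_mul _).congr_of_eventuallyEq
    hrepr |>.differentiableWithinAt

end PartialDerivative

theorem NaturalSeries.mono {m : ℕ} {a b : (Fin m → ℝ) → ℂ} (ha : NaturalSeries a)
    (hba : ∀ α, b α ≠ 0 → a α ≠ 0) : NaturalSeries b :=
  ⟨fun α hα => ha.1 α (hba α hα), fun j R hR => (ha.2 j R hR).subset
    fun _ ⟨⟨α, hα, hαr⟩, hr⟩ => ⟨⟨α, hba α hα, hαr⟩, hr⟩⟩

theorem isOpen_SQD (c C : ℝ) : IsOpen (SQD c C) :=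
  isOpen_lt Complex.continuous_re (by fun_prop)

theorem isOpen_QDom (c C : ℝ) (m : ℕ) : IsOpen (QDom c C m) := by
  have : QDom c C m = Set.pi univ fun _ => SQD c C := by ext z; simp [QDom]
  exact this ▸ isOpen_set_pi finite_univ fun _ _ => isOpen_SQD c C

theorem QDom_mono {c C c' C' : ℝ} (h : SQD c' C' ⊆ SQD c C) (m : ℕ) :
    QDom c' C' m ⊆ QDom c C m :=
  fun _ hz j => h (hz j)

theorem sqrt_abs_le_sqrt_abs_add_one {x y : ℝ} (h : |x - y| ≤ 1) :
    Real.sqrt |x| ≤ Real.sqrt |y| + 1 := by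
  have hxy : |x| ≤ |y| + 1 := by linarith [abs_sub_abs_le_abs_sub x y]
  refine Real.sqrt_le_iff.mpr ⟨by positivity, ?_⟩
  nlinarith [Real.sq_sqrt (abs_nonneg y), Real.sqrt_nonneg |y|]

/-- A step of length `≤ 1` raises `Re` by `≤ 1` and `√|Im|` by `≤ 1`; the factor
`exp (-(1 + C))` absorbs both. -/
theorem add_mem_SQD {c C : ℝ} (hc : 0 < c) (hC : 0 ≤ C) {w s : ℂ}
    (hw : w ∈ SQD (c * Real.exp (-(1 + C))) C) (hs : ‖s‖ ≤ 1) : w + s ∈ SQD c C := by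
  rw [SQD, mem_ofPred_eq, Real.log_mul hc.ne' (Real.exp_pos _).ne', Real.log_exp] at hw
  have hre : s.re ≤ 1 := (Complex.re_le_norm s).trans hs
  have him : Real.sqrt |(w + s).im| ≤ Real.sqrt |w.im| + 1 :=
    sqrt_abs_le_sqrt_abs_add_one (by simpa using (Complex.abs_im_le_norm s).trans hs)
  show (w + s).re < Real.log c - C * Real.sqrt |(w + s).im|
  nlinarith [mul_le_mul_of_nonneg_left him hC, Complex.add_re w s]

theorem SQD_mul_exp_neg_subset {c C : ℝ} (hc : 0 < c) (hC : 0 ≤ C) :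
    SQD (c * Real.exp (-(1 + C))) C ⊆ SQD c C :=
  fun w hw => by simpa using add_mem_SQD hc hC hw (s := 0) (by simp)

theorem add_single_mem_QDom {m : ℕ} {c C : ℝ} (hc : 0 < c) (hC : 0 ≤ C) {z : Fin m → ℂ}
    (hz : z ∈ QDom (c * Real.exp (-(1 + C))) C m) (i : Fin m) {s : ℂ} (hs : ‖s‖ ≤ 1) :
    z + Pi.single i s ∈ QDom c C m := fun j =>
  add_mem_SQD hc hC (hz j)
    ((norm_le_pi_norm (Pi.single i s : Fin m → ℂ) j).trans (by rwa [Pi.norm_single]))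

theorem eNorm_nonneg {m : ℕ} (z : Fin m → ℂ) : 0 ≤ eNorm z :=
  Real.sqrt_nonneg _

theorem eNorm_add_single_le {m : ℕ} (z : Fin m → ℂ) (i : Fin m) {s : ℂ} (hs : ‖s‖ ≤ 1) :
    eNorm (z + Pi.single i s) ≤ Real.exp 1 * eNorm z := by
  have hcoord : ∀ j,
      Real.exp ((z + Pi.single i s : Fin m → ℂ) j).re ≤ Real.exp 1 * Real.exp (z j).re := by
    intro j
    rw [← Real.exp_add, Pi.add_apply, Complex.add_re, add_comm 1]
    gcongr
    exact (Complex.re_le_norm _).trans ((norm_le_pi_norm (Pi.single i s : Fin m → ℂ) j).trans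
      (by rwa [Pi.norm_single]))
  rw [eNorm, eNorm, ← Real.sqrt_sq (Real.exp_pos 1).le, ← Real.sqrt_mul (by positivity),
    Finset.mul_sum]
  gcongr with j
  rw [← mul_pow]
  gcongr
  exact hcoord j

theorem expMono_add_single {m : ℕ} (α : Fin m → ℝ) (z : Fin m → ℂ) (i : Fin m) (s : ℂ) :
    expMono α (z + Pi.single i s) = expMono α z * Complex.exp (α i * s) := by
  simp only [expMono, ← Complex.exp_add, Pi.add_apply, mul_add, Finset.sum_add_distrib,
    Pi.single_apply, mul_ite, mul_zero, Finset.sum_ite_eq', Finset.mem_univ, if_true]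

theorem fderiv_expMono_apply_single {m : ℕ} (α : Fin m → ℝ) (z : Fin m → ℂ) (i : Fin m) :
    fderiv ℂ (expMono α) z (Pi.single i 1) = α i * expMono α z := by
  have hdiff : DifferentiableAt ℂ (expMono α) (z + Pi.single i 0) := by
    unfold expMono; fun_prop
  have hslice : HasDerivAt (fun s => expMono α (z + Pi.single i s)) (α i * expMono α z) 0 := by
    simp only [expMono_add_single]
    have h := (((hasDerivAt_id (0 : ℂ)).const_mul (α i : ℂ)).cexp).const_mul (expMono α z)
    simp only [id, mul_zero, Complex.exp_zero, one_mul, mul_one] at h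
    exact h.congr_deriv (mul_comm _ _)
  simpa using (hasDerivAt_add_single hdiff).unique hslice

theorem differentiable_expMono {m : ℕ} (α : Fin m → ℝ) : Differentiable ℂ (expMono α) := by
  unfold expMono; fun_prop

theorem norm_fderiv_apply_single_sub_sum_le {m : ℕ} {f : (Fin m → ℂ) → ℂ}
    (F : Finset (Fin m → ℝ)) (a : (Fin m → ℝ) → ℂ) {z : Fin m → ℂ} {i : Fin m} {M : ℝ}
    (hf : ∀ s ∈ closedBall (0 : ℂ) 1, DifferentiableAt ℂ f (z + Pi.single i s))
    (hM : ∀ s ∈ sphere (0 : ℂ) 1,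
      ‖f (z + Pi.single i s) - ∑ α ∈ F, a α * expMono α (z + Pi.single i s)‖ ≤ M) :
    ‖fderiv ℂ f z (Pi.single i 1) - ∑ α ∈ F, α i * a α * expMono α z‖ ≤ M := by
  have hP : ∀ w, DifferentiableAt ℂ (fun w => ∑ α ∈ F, a α * expMono α w) w := fun w =>
    DifferentiableAt.fun_sum fun α _ => (differentiable_expMono α w).const_mul (a α)
  have hf0 : DifferentiableAt ℂ f z := by simpa using hf 0 (mem_closedBall_self zero_le_one)
  have hderiv : fderiv ℂ (fun w => f w - ∑ α ∈ F, a α * expMono α w) z (Pi.single i 1) =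
      fderiv ℂ f z (Pi.single i 1) - ∑ α ∈ F, α i * a α * expMono α z := by
    rw [fderiv_fun_sub hf0 (hP z), fderiv_fun_sum fun α _ =>
      (differentiable_expMono α z).const_mul (a α)]
    simp only [sub_apply, FunLike.coe_sum, Finset.sum_apply,
      fderiv_const_mul (differentiable_expMono _ z), smul_apply,
      fderiv_expMono_apply_single, smul_eq_mul]
    congr 1
    exact Finset.sum_congr rfl fun α _ => by ring
  simpa [hderiv] using norm_fderiv_apply_single_le one_pos
    (f := fun w => f w - ∑ α ∈ F, a α * expMono α w) (fun s hs => (hf s hs).sub (hP _)) hM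

theorem norm_fderiv_apply_single_sub_sum_le_of_mem_QDom {m : ℕ} {c C ν ε δ : ℝ} (hc : 0 < c)
    (hC : 0 ≤ C) (hν : 0 ≤ ν) (hε : 0 ≤ ε) {f : (Fin m → ℂ) → ℂ}
    (hf : DifferentiableOn ℂ f (QDom c C m)) (F : Finset (Fin m → ℝ)) (a : (Fin m → ℝ) → ℂ)
    (hbound : ∀ z ∈ QDom c C m, eNorm z < δ →
      ‖f z - ∑ α ∈ F, a α * expMono α z‖ ≤ ε * eNorm z ^ ν)
    {z : Fin m → ℂ} (hz : z ∈ QDom (c * Real.exp (-(1 + C))) C m)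
    (hzδ : eNorm z < δ / Real.exp 1) (i : Fin m) :
    ‖fderiv ℂ f z (Pi.single i 1) - ∑ α ∈ F, α i * a α * expMono α z‖ ≤
      ε * Real.exp ν * eNorm z ^ ν := by
  have hdisc : ∀ s : ℂ, ‖s‖ ≤ 1 → z + Pi.single i s ∈ QDom c C m :=
    fun s hs => add_single_mem_QDom hc hC hz i hs
  refine norm_fderiv_apply_single_sub_sum_le F a (fun s hs => hf.differentiableAt
    ((isOpen_QDom c C m).mem_nhds (hdisc s (mem_closedBall_zero_iff.mp hs)))) fun s hs => ?_
  have hs1 : ‖s‖ ≤ 1 := (mem_sphere_zero_iff_norm.mp hs).le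
  have hE := eNorm_add_single_le z i hs1
  have hpow : eNorm (z + Pi.single i s) ^ ν ≤ Real.exp ν * eNorm z ^ ν := by
    rw [← Real.exp_one_rpow, ← Real.mul_rpow (Real.exp_pos 1).le (eNorm_nonneg z)]
    exact Real.rpow_le_rpow (eNorm_nonneg _) hE hν
  rw [mul_assoc]
  exact (hbound _ (hdisc s hs1) (hE.trans_lt ((lt_div_iff₀' (Real.exp_pos 1)).mp hzδ))).trans
    (mul_le_mul_of_nonneg_left hpow hε)

theorem stmt3_general (m : ℕ) (c C : ℝ)
    (f : (Fin m → ℂ) → ℂ) (hf : DifferentiableOn ℂ f (QDom c C m))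
    (a : (Fin m → ℝ) → ℂ) (ha : HasAsymExp c C f a) (i : Fin m) :
    DifferentiableOn ℂ (fun z => fderiv ℂ f z (Pi.single i 1)) (QDom c C m) ∧
    HasAsymExp c C (fun z => fderiv ℂ f z (Pi.single i 1))
      (fun α => (α i : ℂ) * a α) := by
  refine ⟨(isOpen_QDom c C m).differentiableOn_fderiv_apply_single hf i,
    ha.1.mono fun α => right_ne_zero_of_mul, fun ν hν => ?_⟩
  obtain ⟨c', C', hc', hC', hsub, F, hF, hbound⟩ := ha.2 ν hν
  refine ⟨c' * Real.exp (-(1 + C')), C', by positivity, hC',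
    (SQD_mul_exp_neg_subset hc' hC'.le).trans hsub, F.filter fun α => α i ≠ 0, fun α => ?_,
    fun ε hε => ?_⟩
  · simp only [Finset.mem_filter, hF, ne_eq, mul_eq_zero, Complex.ofReal_eq_zero, not_or]
    tauto
  obtain ⟨δ, hδ, hδbound⟩ := hbound (ε / Real.exp ν) (by positivity)
  refine ⟨δ / Real.exp 1, by positivity, fun z hz hzδ => ?_⟩
  rw [Finset.sum_filter_of_ne fun α _ h => by simp_all]
  simpa [div_mul_cancel₀ ε (Real.exp_pos ν).ne'] using
    norm_fderiv_apply_single_sub_sum_le_of_mem_QDom hc' hC'.le hν.le (by positivity)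
      (hf.mono (QDom_mono hsub m)) F a hδbound hz hzδ i

/-- If `f` is holomorphic on `Ω(c,C)^m` with asymptotic expansion `a`,
then the partial derivative `∂f/∂zᵢ` is holomorphic there with asymptotic expansion
`α ↦ αᵢ·a(α)`. -/
theorem stmt3 (m : ℕ) (c C : ℝ) (hc : 0 < c) (hC : 0 < C)
    (f : (Fin m → ℂ) → ℂ) (hf : DifferentiableOn ℂ f (QDom c C m))
    (a : (Fin m → ℝ) → ℂ) (ha : HasAsymExp c C f a) (i : Fin m) :
    DifferentiableOn ℂ (fun z => fderiv ℂ f z (Pi.single i 1)) (QDom c C m) ∧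
    HasAsymExp c C (fun z => fderiv ℂ f z (Pi.single i 1))
      (fun α => (α i : ℂ) * a α) :=
  stmt3_general m c C f hf a ha i
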